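/- Let z = x + iy be a complex number on the unit circle (x² + y² = 1) with x ≠ 0, and define A(z) = (1/2)·(arctan((y+1)/x) − arctan((y−1)/x)) + (i/4)·ln((x²+(y−1)²)/(x²+(y+1)²)). Then A(z) = sign(x)·π/4 − (i/2)·artanh(y). -/
import Mathlib


open Complex

/-- Real inverse hyperbolic tangent, `artanh t = (1/2) ln ((1+t)/(1-t))`. -/
noncomputable def artanh (t : ℝ) : ℝ := Real.log ((1 + t) / (1 - t)) / 2

/-- Closed-form expression `A(w)` for the principal branch of the inverse cotangent
away from the imaginary axis. -/
noncomputable def A (w : ℂ) : ℂ :=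
  ((Real.arctan ((w.im + 1) / w.re) - Real.arctan ((w.im - 1) / w.re)) / 2 : ℝ) +
    Complex.I / 4 *
      (Real.log ((w.re ^ 2 + (w.im - 1) ^ 2) / (w.re ^ 2 + (w.im + 1) ^ 2)) : ℝ)

theorem stmt19 (z : ℂ) (hcirc : z.re ^ 2 + z.im ^ 2 = 1) (h : z.re ≠ 0) :
    A z = (Real.sign z.re : ℝ) * (Real.pi / 4 : ℝ) -
      Complex.I / 2 * (artanh z.im : ℝ) := by
  set x := z.re with hx
  set y := z.im with hy
  have hx2 : 0 < x ^ 2 := by positivity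
  have h1p : 0 < 1 + y := by nlinarith
  have h1m : 0 < 1 - y := by nlinarith
  have e1 : x ^ 2 + (y - 1) ^ 2 = 2 * (1 - y) := by nlinarith
  have e2 : x ^ 2 + (y + 1) ^ 2 = 2 * (1 + y) := by nlinarith
  have hlog : Real.log ((x ^ 2 + (y - 1) ^ 2) / (x ^ 2 + (y + 1) ^ 2)) =
      - Real.log ((1 + y) / (1 - y)) := by
    rw [e1, e2, ← Real.log_inv]
    congr 1
    field_simp
  have hb : (y - 1) / x = -((y + 1) / x)⁻¹ := by
    have hyne : y + 1 ≠ 0 := by linarith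
    rw [inv_div]
    field_simp [hyne]
    nlinarith
  have harctan : Real.arctan ((y + 1) / x) - Real.arctan ((y - 1) / x) =
      Real.sign x * (Real.pi / 2) := by
    rw [hb, Real.arctan_neg, sub_neg_eq_add]
    rcases h.lt_or_gt with hxlt | hxgt
    · have ha : (y + 1) / x < 0 := div_neg_of_pos_of_neg (by linarith) hxlt
      rw [Real.arctan_inv_of_neg ha, Real.sign_of_neg hxlt]
      ring
    · have ha : 0 < (y + 1) / x := div_pos (by linarith) hxgt
      rw [Real.arctan_inv_of_pos ha, Real.sign_of_pos hxgt]
      ring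
  apply Complex.ext <;>
    simp [A, artanh, ← hx, ← hy, hlog, harctan, Complex.div_re, Complex.div_im] <;>
    ring
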